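/- Let D be a finite set of forbidden patterns and let m ≥ 1 be such that every pattern in D has length at most m. Then cap(D) > 0 if and only if there exists a finite word w over {−1, 0, +1} such that w has the word of m zeros as a prefix, w has the word (+1) followed by m−1 zeros as a suffix, and no element of D ∪ (−D) occurs as a contiguous subword (factor) of w. -/

import Mathlib

/-!
If `w` is admissible, encode a bit `b` by the binary word `block w b` marking the positions where
`w` equals `1` (for `b = true`) or `-1` (for `b = false`). The difference of two encodings of the
same length is a concatenation of the blocks `w`, `-w` and `0^|w|`, each of which starts with
`0^m` and ends with `0^(m-1)`; hence every factor of length at most `m` is a factor of `w` or `-w`,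
and the `2^k` encodings of length `k|w|` form a code avoiding `D`.

Conversely, if two words of a code agree on their first `m` and last `m - 1` letters, cutting their
difference right after its last nonzero letter and `m - 1` further zeros gives an admissible word up
to sign. Without admissible words `δ_n(D)` is therefore bounded independently of `n`, and the
capacity vanishes.
-/

/-- The integer value of a binary symbol. -/
def boolToInt (b : Bool) : ℤ := if b then 1 else 0

/-- Componentwise difference of two binary words, a word over `{-1, 0, +1}`. -/
def diffWord (u v : List Bool) : List ℤ :=
  List.zipWith (fun a b => boolToInt a - boolToInt b) u v

/-- A forbidden pattern: a nonempty finite word over the alphabet `{-1, 0, +1}`. -/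
def IsPattern (p : List ℤ) : Prop :=
  p ≠ [] ∧ ∀ x ∈ p, x = -1 ∨ x = 0 ∨ x = 1

/-- A code `C` of binary words avoids the forbidden set `D` if no difference of two
distinct code words contains a pattern of `D` as a contiguous subword (factor). -/
def AvoidsCode (D : Finset (List ℤ)) (C : Finset (List Bool)) : Prop :=
  ∀ u ∈ C, ∀ v ∈ C, u ≠ v → ∀ p ∈ D, ¬ p <:+: diffWord u v

/-- `delta D n` : the maximal cardinality of a code of binary words of length `n`
avoiding the forbidden set `D`. -/
noncomputable def delta (D : Finset (List ℤ)) (n : ℕ) : ℕ :=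
  sSup {k : ℕ | ∃ C : Finset (List Bool),
    (∀ u ∈ C, u.length = n) ∧ AvoidsCode D C ∧ C.card = k}

/-- The capacity of a set of forbidden difference patterns. -/
noncomputable def cap (D : Finset (List ℤ)) : ℝ :=
  Filter.limsup (fun n : ℕ => Real.logb 2 (delta D n) / n) Filter.atTop

open List

section Lists

variable {α : Type*}

theorem exists_eq_append_cons_replicate {a : α} :
    ∀ {l : List α}, (∃ x ∈ l, x ≠ a) → ∃ g c t, c ≠ a ∧ l = g ++ c :: replicate t a
  | [], ⟨_, hx, _⟩ => absurd hx not_mem_nil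
  | b :: l, h => by
    by_cases hl : ∃ x ∈ l, x ≠ a
    · obtain ⟨g, c, t, hc, rfl⟩ := exists_eq_append_cons_replicate hl
      exact ⟨b :: g, c, t, hc, rfl⟩
    · push Not at hl
      have hb : b ≠ a := by
        obtain ⟨x, hx, hxa⟩ := h
        rcases mem_cons.1 hx with rfl | hx
        exacts [hxa, absurd (hl x hx) hxa]
      exact ⟨[], b, l.length, hb, by rw [← eq_replicate_iff.2 ⟨rfl, hl⟩]; rfl⟩

theorem infix_flatten_of_length_le {a : α} {m : ℕ} {p : List α} :
    ∀ {BS : List (List α)}, (∀ B ∈ BS, replicate m a <+: B ∧ replicate (m - 1) a <:+ B) →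
      p <:+: BS.flatten → p.length ≤ m → p <:+: replicate m a ∨ ∃ B ∈ BS, p <:+: B
  | [], _, hp, _ => .inl (by rw [flatten_nil, infix_nil] at hp; exact hp ▸ nil_infix)
  | B :: BS, hB, hp, hlen => by
    rw [flatten_cons, infix_append_iff] at hp
    rcases hp with hp | hp | ⟨s, t, rfl, hs, ht⟩
    · exact .inr ⟨B, mem_cons_self, hp⟩
    · rcases infix_flatten_of_length_le (fun B' h => hB B' (mem_cons_of_mem _ h)) hp hlen with
        h | ⟨B', hB', h⟩
      exacts [.inl h, .inr ⟨B', mem_cons_of_mem _ hB', h⟩]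
    obtain rfl | ht_ne := eq_or_ne t []
    · exact .inr ⟨B, mem_cons_self, by simpa using hs.isInfix⟩
    rw [length_append] at hlen
    have hs_zero : s <:+ replicate (m - 1) a :=
      suffix_of_suffix_length_le hs (hB B mem_cons_self).2 (by
        have := length_pos_iff.2 ht_ne
        rw [length_replicate]
        omega)
    have ht_zero : t <+: replicate m a := by
      cases BS with
      | nil => exact absurd (prefix_nil.1 ht) ht_ne
      | cons B' BS =>
        exact prefix_of_prefix_length_le ht
          ((hB B' (mem_cons_of_mem _ mem_cons_self)).1.trans (prefix_append _ _))
          (by rw [length_replicate]; omega)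
    refine .inl (infix_replicate_iff.2 ⟨by rw [length_append]; omega,
      eq_replicate_iff.2 ⟨rfl, fun x hx => ?_⟩⟩)
    rcases mem_append.1 hx with hx | hx
    exacts [eq_of_mem_replicate (hs_zero.subset hx), eq_of_mem_replicate (ht_zero.subset hx)]

theorem map_infix_iff_of_involutive {f : α → α} (hf : Function.Involutive f) {l l' : List α} :
    l.map f <:+: l' ↔ l <:+: l'.map f := by
  constructor <;> intro h <;> simpa [map_map, hf.comp_self] using h.map f

theorem flatMap_inj_of_length_eq {β : Type*} {f : α → List β} (hf : Function.Injective f)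
    (hlen : ∀ a b, (f a).length = (f b).length) :
    ∀ {s t : List α}, s.length = t.length → s.flatMap f = t.flatMap f → s = t
  | [], [], _, _ => rfl
  | a :: s, b :: t, hst, h => by
    rw [flatMap_cons, flatMap_cons] at h
    obtain ⟨hab, h⟩ := append_inj h (hlen a b)
    rw [hf hab, flatMap_inj_of_length_eq hf hlen (by simpa using hst) h]

theorem exists_eq_of_mem_zipWith {β γ : Type*} {f : α → β → γ} {l : List α} {l' : List β}
    {x : γ} (h : x ∈ zipWith f l l') : ∃ a b, f a b = x := by
  rw [← map_uncurry_zip_eq_zipWith] at h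
  obtain ⟨⟨a, b⟩, -, rfl⟩ := mem_map.1 h
  exact ⟨a, b, rfl⟩

end Lists

def IsTernary (w : List ℤ) : Prop :=
  ∀ x ∈ w, x = -1 ∨ x = 0 ∨ x = 1

theorem IsTernary.of_sublist {v w : List ℤ} (hw : IsTernary w) (h : v <+ w) : IsTernary v :=
  fun x hx => hw x (h.subset hx)

theorem IsTernary.map_neg {w : List ℤ} (hw : IsTernary w) : IsTernary (w.map fun x => -x) := by
  intro x hx
  obtain ⟨y, hy, rfl⟩ := mem_map.1 hx
  rcases hw y hy with rfl | rfl | rfl <;> simp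

theorem isTernary_diffWord (u v : List Bool) : IsTernary (diffWord u v) := by
  intro x hx
  obtain ⟨a, b, rfl⟩ := exists_eq_of_mem_zipWith hx
  cases a <;> cases b <;> simp [boolToInt]

theorem diffWord_self (u : List Bool) : diffWord u u = replicate u.length 0 := by
  simp [diffWord, zipWith_self]

theorem diffWord_swap (u v : List Bool) : diffWord v u = (diffWord u v).map fun x => -x := by
  simp only [diffWord, map_zipWith, neg_sub]
  exact zipWith_comm

theorem diffWord_append {u v u' v' : List Bool} (h : u.length = v.length) :
    diffWord (u ++ u') (v ++ v') = diffWord u v ++ diffWord u' v' :=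
  zipWith_append h

theorem diffWord_take (u v : List Bool) (k : ℕ) :
    (diffWord u v).take k = diffWord (u.take k) (v.take k) :=
  take_zipWith

theorem diffWord_drop (u v : List Bool) (k : ℕ) :
    (diffWord u v).drop k = diffWord (u.drop k) (v.drop k) :=
  drop_zipWith

theorem exists_mem_diffWord_ne_zero :
    ∀ {u v : List Bool}, u.length = v.length → u ≠ v → ∃ x ∈ diffWord u v, x ≠ 0
  | [], [], _, h => absurd rfl h
  | a :: u, b :: v, hlen, h => by
    by_cases hab : a = b
    · subst hab
      obtain ⟨x, hx, hx0⟩ :=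
        exists_mem_diffWord_ne_zero (by simpa using hlen) (fun huv => h (congrArg _ huv))
      exact ⟨x, mem_cons_of_mem _ hx, hx0⟩
    · exact ⟨_, mem_cons_self, by cases a <;> cases b <;> simp_all [boolToInt]⟩

theorem diffWord_flatMap {β : Type*} {f : β → List Bool}
    (hf : ∀ a b, (f a).length = (f b).length) :
    ∀ {s t : List β}, s.length = t.length →
      diffWord (s.flatMap f) (t.flatMap f) =
        (zipWith (fun a b => diffWord (f a) (f b)) s t).flatten
  | [], [], _ => rfl
  | a :: s, b :: t, hst => by
    rw [flatMap_cons, flatMap_cons, diffWord_append (hf a b),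
      diffWord_flatMap hf (by simpa using hst)]
    rfl

section Codes

theorem card_le_two_pow_of_length_eq {C : Finset (List Bool)} {n : ℕ}
    (hC : ∀ u ∈ C, u.length = n) : C.card ≤ 2 ^ n :=
  calc C.card ≤ (Finset.univ.image (List.Vector.toList : List.Vector Bool n → List Bool)).card :=
        Finset.card_le_card fun u hu => Finset.mem_image.2 ⟨⟨u, hC u hu⟩, Finset.mem_univ _, rfl⟩
    _ ≤ Fintype.card (List.Vector Bool n) := Finset.card_image_le
    _ = 2 ^ n := by simp [card_vector]

variable (D : Finset (List ℤ))

theorem bddAbove_card_code (n : ℕ) :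
    BddAbove {k : ℕ | ∃ C : Finset (List Bool),
      (∀ u ∈ C, u.length = n) ∧ AvoidsCode D C ∧ C.card = k} :=
  ⟨2 ^ n, by rintro k ⟨C, hC, -, rfl⟩; exact card_le_two_pow_of_length_eq hC⟩

variable {D}

theorem card_le_delta {n : ℕ} {C : Finset (List Bool)} (hC : ∀ u ∈ C, u.length = n)
    (hav : AvoidsCode D C) : C.card ≤ delta D n :=
  le_csSup (bddAbove_card_code D n) ⟨C, hC, hav, rfl⟩

theorem one_le_delta (n : ℕ) : 1 ≤ delta D n :=
  card_le_delta (C := {replicate n false}) (by simp) (by simp [AvoidsCode])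

theorem delta_le_of_forall_card_le {n K : ℕ}
    (h : ∀ C : Finset (List Bool), (∀ u ∈ C, u.length = n) → AvoidsCode D C → C.card ≤ K) :
    delta D n ≤ K :=
  csSup_le ⟨1, {replicate n false}, by simp, by simp [AvoidsCode], rfl⟩
    (by rintro k ⟨C, hC, hav, rfl⟩; exact h C hC hav)

theorem delta_le_two_pow (n : ℕ) : delta D n ≤ 2 ^ n :=
  delta_le_of_forall_card_le fun _ hC _ => card_le_two_pow_of_length_eq hC

theorem logb_delta_div_nonneg (n : ℕ) : 0 ≤ Real.logb 2 (delta D n) / n :=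
  div_nonneg (Real.logb_nonneg one_lt_two (by exact_mod_cast one_le_delta n)) n.cast_nonneg

theorem logb_delta_div_le_one (n : ℕ) : Real.logb 2 (delta D n) / n ≤ 1 := by
  refine div_le_one_of_le₀ ((Real.logb_le_iff_le_rpow one_lt_two ?_).2 ?_) n.cast_nonneg
  · exact_mod_cast one_le_delta n
  · rw [Real.rpow_natCast]
    exact_mod_cast delta_le_two_pow n

theorem cap_pos_of_two_pow_le_delta {L : ℕ} (hL : 0 < L) (h : ∀ k, 2 ^ k ≤ delta D (k * L)) :
    0 < cap D := by
  have hfreq : ∃ᶠ n in Filter.atTop, (1 / L : ℝ) ≤ Real.logb 2 (delta D n) / n := by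
    refine Filter.frequently_atTop.2 fun N => ⟨(N + 1) * L, by nlinarith, ?_⟩
    have hk : ((N + 1 : ℕ) : ℝ) ≤ Real.logb 2 (delta D ((N + 1) * L)) := by
      rw [Real.le_logb_iff_rpow_le one_lt_two (by exact_mod_cast one_le_delta _),
        Real.rpow_natCast]
      exact_mod_cast h (N + 1)
    rw [le_div_iff₀ (by positivity)]
    calc (1 / L : ℝ) * ((N + 1) * L : ℕ) = (N + 1 : ℕ) := by push_cast; field_simp
      _ ≤ _ := hk
  exact (by positivity : (0 : ℝ) < 1 / L).trans_le <| Filter.le_limsup_of_frequently_le hfreq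
    (Filter.isBoundedUnder_of ⟨1, logb_delta_div_le_one⟩)

theorem cap_nonpos_of_delta_le {K : ℕ} (h : ∀ n, delta D n ≤ K) : cap D ≤ 0 := by
  have hK : Filter.Tendsto (fun n : ℕ => Real.logb 2 K / n) Filter.atTop (nhds 0) :=
    tendsto_const_div_atTop_nhds_zero_nat _
  calc cap D ≤ Filter.limsup (fun n : ℕ => Real.logb 2 K / n) Filter.atTop := by
        refine Filter.limsup_le_limsup (Filter.Eventually.of_forall fun n => ?_)
          (Filter.isCoboundedUnder_le_of_le _ logb_delta_div_nonneg) hK.isBoundedUnder_le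
        refine div_le_div_of_nonneg_right (Real.logb_le_logb_of_le one_lt_two ?_ ?_) n.cast_nonneg
        · exact_mod_cast one_le_delta n
        · exact_mod_cast h n
    _ = 0 := hK.limsup_eq

end Codes

section Encoding

def block (w : List ℤ) (b : Bool) : List Bool :=
  w.map fun x => decide (x = if b then 1 else -1)

def encode (w : List ℤ) (s : List Bool) : List Bool :=
  s.flatMap (block w)

theorem length_block (w : List ℤ) (b : Bool) : (block w b).length = w.length :=
  length_map _

theorem length_encode (w : List ℤ) (s : List Bool) :
    (encode w s).length = s.length * w.length := by
  simp [encode, length_flatMap, length_block, sum_replicate]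

variable {w : List ℤ}

theorem block_injective (hw : (1 : ℤ) ∈ w) : Function.Injective (block w) := by
  have : block w true ≠ block w false := fun h => by
    simpa using map_inj_left.1 h 1 hw
  intro a b hab
  cases a <;> cases b <;> first | rfl | exact absurd hab this | exact absurd hab.symm this

theorem encode_inj (hw : (1 : ℤ) ∈ w) {s t : List Bool} (hst : s.length = t.length)
    (h : encode w s = encode w t) : s = t :=
  flatMap_inj_of_length_eq (block_injective hw) (fun a b => by simp only [length_block]) hst h

theorem diffWord_block_true_false (hw : IsTernary w) :
    diffWord (block w true) (block w false) = w := by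
  simp only [diffWord, block, zipWith_map, zipWith_self]
  refine (map_congr_left fun x hx => ?_).trans (map_id w)
  rcases hw x hx with rfl | rfl | rfl <;> simp [boolToInt]

theorem diffWord_block (hw : IsTernary w) (a b : Bool) :
    diffWord (block w a) (block w b) = w ∨
      diffWord (block w a) (block w b) = w.map (fun x => -x) ∨
      diffWord (block w a) (block w b) = replicate w.length 0 := by
  cases a <;> cases b
  · exact .inr (.inr (by rw [diffWord_self, length_block]))
  · exact .inr (.inl (by rw [diffWord_swap, diffWord_block_true_false hw]))
  · exact .inl (diffWord_block_true_false hw)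
  · exact .inr (.inr (by rw [diffWord_self, length_block]))

end Encoding

section Admissible

variable {D : Finset (List ℤ)} {m : ℕ}

def AvoidsSymm (D : Finset (List ℤ)) (w : List ℤ) : Prop :=
  ∀ p ∈ D, ¬ p <:+: w ∧ ¬ p.map (fun x => -x) <:+: w

def Admissible (D : Finset (List ℤ)) (m : ℕ) (w : List ℤ) : Prop :=
  IsTernary w ∧ replicate m (0 : ℤ) <+: w ∧ ((1 : ℤ) :: replicate (m - 1) 0) <:+ w ∧
    AvoidsSymm D w

theorem AvoidsSymm.of_infix {v w : List ℤ} (hw : AvoidsSymm D w) (h : v <:+: w) :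
    AvoidsSymm D v :=
  fun p hp => ⟨fun h' => (hw p hp).1 (h'.trans h), fun h' => (hw p hp).2 (h'.trans h)⟩

theorem AvoidsSymm.map_neg {w : List ℤ} (hw : AvoidsSymm D w) :
    AvoidsSymm D (w.map fun x => -x) := by
  refine fun p hp => ⟨fun h => (hw p hp).2 ((map_infix_iff_of_involutive neg_involutive).2 h),
    fun h => (hw p hp).1 ?_⟩
  simpa [map_map] using (map_infix_iff_of_involutive neg_involutive).2 h

theorem exists_admissible_of_cons_replicate_suffix {w : List ℤ} {c : ℤ} (hw : IsTernary w)
    (hc : c ≠ 0) (hpre : replicate m 0 <+: w) (hsuf : c :: replicate (m - 1) 0 <:+ w)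
    (hav : AvoidsSymm D w) : ∃ w', Admissible D m w' := by
  rcases hw c (hsuf.subset mem_cons_self) with rfl | rfl | rfl
  · exact ⟨w.map fun x => -x, hw.map_neg, by simpa using hpre.map (fun x : ℤ => -x),
      by simpa using hsuf.map (fun x : ℤ => -x), hav.map_neg⟩
  · exact absurd rfl hc
  · exact ⟨w, hw, hpre, hsuf, hav⟩

theorem exists_admissible_of_exists_ne_zero {d : List ℤ} (hd : IsTernary d)
    (hpre : replicate m 0 <+: d) (hsuf : replicate (m - 1) 0 <:+ d) (hne : ∃ x ∈ d, x ≠ 0)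
    (hav : AvoidsSymm D d) : ∃ w, Admissible D m w := by
  obtain ⟨g, c, t, hc, rfl⟩ := exists_eq_append_cons_replicate hne
  have ht : m - 1 ≤ t := by
    rcases suffix_or_suffix_of_suffix hsuf (suffix_append g (c :: replicate t 0)) with h | h
    · rcases suffix_cons_iff.1 h with h | h
      · exact absurd (eq_of_mem_replicate (h ▸ mem_cons_self : c ∈ replicate (m - 1) 0)) hc
      · simpa using h.length_le
    · exact absurd (eq_of_mem_replicate (h.subset mem_cons_self)) hc
  have hw : g ++ c :: replicate (m - 1) 0 <+: g ++ c :: replicate t 0 := by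
    rw [prefix_append_right_inj, cons_prefix_cons]
    exact ⟨rfl, prefix_replicate_iff.2 ⟨by simpa using ht, by simp⟩⟩
  refine exists_admissible_of_cons_replicate_suffix (hd.of_sublist hw.sublist) hc ?_
    (suffix_append _ _) (hav.of_infix hw.isInfix)
  rcases prefix_or_prefix_of_prefix hpre hw with h | h
  · exact h
  · exact absurd (eq_of_mem_replicate (h.subset (mem_append_right g mem_cons_self))) hc

theorem exists_admissible_of_take_eq_of_drop_eq {u v : List Bool} (huv : u.length = v.length)
    (hne : u ≠ v) (htake : u.take m = v.take m)
    (hdrop : u.drop (u.length - (m - 1)) = v.drop (u.length - (m - 1)))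
    (hD : ∀ p ∈ D, ¬ p <:+: diffWord u v ∧ ¬ p <:+: diffWord v u) : ∃ w, Admissible D m w := by
  have hm : m ≤ u.length := by
    by_contra h
    exact hne (by rw [← take_of_length_le (le_of_not_ge h), htake, take_of_length_le (by omega)])
  refine exists_admissible_of_exists_ne_zero (isTernary_diffWord u v) ?_ ?_
    (exists_mem_diffWord_ne_zero huv hne) fun p hp => ⟨(hD p hp).1, fun h => (hD p hp).2 ?_⟩
  · have := take_prefix m (diffWord u v)
    rwa [diffWord_take, htake, diffWord_self, length_take, ← huv, min_eq_left hm] at this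
  · have := drop_suffix (u.length - (m - 1)) (diffWord u v)
    rwa [diffWord_drop, hdrop, diffWord_self, length_drop, ← huv,
      Nat.sub_sub_self (by omega)] at this
  · rw [diffWord_swap]
    exact (map_infix_iff_of_involutive neg_involutive).1 h

theorem delta_le_of_not_exists_admissible (h : ¬ ∃ w, Admissible D m w) (n : ℕ) :
    delta D n ≤ ({l : List Bool | l.length ≤ m} ×ˢ {l : List Bool | l.length ≤ m}).ncard := by
  refine delta_le_of_forall_card_le fun C hC hav => ?_
  rw [← Set.ncard_coe_finset]
  refine Set.ncard_le_ncard_of_injOn (fun u => (u.take m, u.drop (n - (m - 1))))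
    (fun u hu => ⟨length_take_le _ _, ?_⟩) ?_
    ((finite_length_le _ _).prod (finite_length_le _ _))
  · simp only [Set.mem_ofPred_eq, length_drop, hC u hu]
    omega
  · intro u hu v hv huv
    by_contra hne
    obtain ⟨htake, hdrop⟩ := Prod.ext_iff.1 huv
    exact h (exists_admissible_of_take_eq_of_drop_eq ((hC u hu).trans (hC v hv).symm) hne htake
      (by rwa [hC u hu]) fun p hp => ⟨hav u hu v hv hne p hp, hav v hv u hu (Ne.symm hne) p hp⟩)

variable {w : List ℤ}

theorem Admissible.length_pos (hw : Admissible D m w) : 0 < w.length :=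
  lt_of_lt_of_le (by simp) hw.2.2.1.length_le

theorem Admissible.replicate_prefix_suffix_diffWord_block (hw : Admissible D m w) (a b : Bool) :
    replicate m 0 <+: diffWord (block w a) (block w b) ∧
      replicate (m - 1) 0 <:+ diffWord (block w a) (block w b) := by
  obtain ⟨hter, hpre, hsuf, -⟩ := hw
  replace hsuf := (suffix_cons _ _).trans hsuf
  rcases diffWord_block hter a b with h | h | h <;> rw [h]
  · exact ⟨hpre, hsuf⟩
  · exact ⟨by simpa using hpre.map (fun x : ℤ => -x), by simpa using hsuf.map (fun x : ℤ => -x)⟩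
  · have hm : m ≤ w.length := by simpa using hpre.length_le
    exact ⟨prefix_replicate_iff.2 ⟨by simpa using hm, by simp⟩,
      suffix_replicate_iff.2 ⟨by simp only [length_replicate]; omega, by simp⟩⟩

theorem Admissible.not_infix_diffWord_block (hw : Admissible D m w) (a b : Bool) {p : List ℤ}
    (hp : p ∈ D) (hlen : p.length ≤ m) : ¬ p <:+: diffWord (block w a) (block w b) := by
  obtain ⟨hter, hpre, -, hav⟩ := hw
  rcases diffWord_block hter a b with h | h | h <;> rw [h] <;> intro hinf
  · exact (hav p hp).1 hinf
  · exact (hav p hp).2 ((map_infix_iff_of_involutive neg_involutive).2 hinf)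
  · exact (hav p hp).1 ((infix_replicate_iff.2 ⟨hlen, (infix_replicate_iff.1 hinf).2⟩).trans
      hpre.isInfix)

theorem Admissible.not_infix_diffWord_encode (hw : Admissible D m w)
    (hlen : ∀ p ∈ D, p.length ≤ m) {s t : List Bool} (hst : s.length = t.length) :
    ∀ p ∈ D, ¬ p <:+: diffWord (encode w s) (encode w t) := by
  intro p hp hinf
  rw [encode, encode, diffWord_flatMap (fun a b => by simp only [length_block]) hst] at hinf
  have hblocks : ∀ B ∈ zipWith (fun a b => diffWord (block w a) (block w b)) s t,
      replicate m 0 <+: B ∧ replicate (m - 1) 0 <:+ B := fun B hB => by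
    obtain ⟨a, b, rfl⟩ := exists_eq_of_mem_zipWith hB
    exact hw.replicate_prefix_suffix_diffWord_block a b
  rcases infix_flatten_of_length_le hblocks hinf (hlen p hp) with h | ⟨B, hB, h⟩
  · exact (hw.2.2.2 p hp).1 (h.trans hw.2.1.isInfix)
  · obtain ⟨a, b, rfl⟩ := exists_eq_of_mem_zipWith hB
    exact hw.not_infix_diffWord_block a b hp (hlen p hp) h

theorem Admissible.two_pow_le_delta (hw : Admissible D m w) (hlen : ∀ p ∈ D, p.length ≤ m)
    (k : ℕ) : 2 ^ k ≤ delta D (k * w.length) := by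
  set C := Finset.univ.image fun f : Fin k → Bool => encode w (ofFn f)
  have hinj : Function.Injective fun f : Fin k → Bool => encode w (ofFn f) := fun f g h =>
    ofFn_injective (encode_inj (hw.2.2.1.subset mem_cons_self) (by simp) h)
  calc 2 ^ k = C.card := by rw [Finset.card_image_of_injective _ hinj]; simp
    _ ≤ delta D (k * w.length) := by
      refine card_le_delta (fun u hu => ?_) fun u hu v hv _ => ?_
      · obtain ⟨f, -, rfl⟩ := Finset.mem_image.1 hu
        rw [length_encode, length_ofFn]
      · obtain ⟨f, -, rfl⟩ := Finset.mem_image.1 hu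
        obtain ⟨g, -, rfl⟩ := Finset.mem_image.1 hv
        exact hw.not_infix_diffWord_encode hlen (by simp)

end Admissible

theorem positive_capacity_iff_admissible_word_general (D : Finset (List ℤ))
    (m : ℕ) (hlen : ∀ p ∈ D, p.length ≤ m) :
    0 < cap D ↔ ∃ w : List ℤ,
      (∀ x ∈ w, x = -1 ∨ x = 0 ∨ x = 1) ∧
      List.replicate m (0:ℤ) <+: w ∧
      ((1:ℤ) :: List.replicate (m - 1) (0:ℤ)) <:+ w ∧
      ∀ p ∈ D, ¬ p <:+: w ∧ ¬ (p.map (fun x => -x)) <:+: w := by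
  change 0 < cap D ↔ ∃ w, Admissible D m w
  constructor
  · intro hpos
    by_contra hno
    exact (cap_nonpos_of_delta_le (delta_le_of_not_exists_admissible hno)).not_gt hpos
  · rintro ⟨w, hw⟩
    exact cap_pos_of_two_pow_le_delta hw.length_pos (hw.two_pow_le_delta hlen)

/-- `cap(D) > 0` iff there is a word over `{-1,0,+1}` with prefix `0^m`,
suffix `+0^{m-1}`, containing no element of `D ∪ (-D)` as a factor. -/
theorem positive_capacity_iff_admissible_word (D : Finset (List ℤ))
    (hD : ∀ p ∈ D, IsPattern p) (m : ℕ) (hm : 1 ≤ m) (hlen : ∀ p ∈ D, p.length ≤ m) :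
    0 < cap D ↔ ∃ w : List ℤ,
      (∀ x ∈ w, x = -1 ∨ x = 0 ∨ x = 1) ∧
      List.replicate m (0:ℤ) <+: w ∧
      ((1:ℤ) :: List.replicate (m - 1) (0:ℤ)) <:+ w ∧
      ∀ p ∈ D, ¬ p <:+: w ∧ ¬ (p.map (fun x => -x)) <:+: w :=
  positive_capacity_iff_admissible_word_general D m hlen
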